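/- For every integer b ≥ 2 and every positive integer k, there exists a nonnegative integer c₀ such that for every integer c with c₀ ≤ c < c₀ + k, the function S_{[c,b]} has no fixed point; that is, there exists a k-desert base b. -/

import Mathlib

/-!
A fixed point of `S_{[c,b]}` is an `a` with `c = a - F a`, where `F` is the sum of squared digits,
and `a - F a` jumps across every power `b ^ n`. Below `b ^ n`, the digit in position `i` contributes
at most `(b - 1) * (b ^ i - 1)`, so `a - F a ≤ b ^ n - 1 - n (b - 1)`. From `b ^ n` on, splitting
`a = r + b ^ n q` with `q ≥ 1` and using `F q ≤ (b - 1) q`, `F r ≤ r + (b - 1) ^ 2` gives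
`a - F a ≥ b ^ n - b (b - 1)`. For `n = b + k` the gap between the two bounds contains `k`
consecutive values of `c`.
-/

/-- The augmented generalized happy function: `c` plus the sum of the squares
of the base-`b` digits of `a`. -/
def S (c b a : ℕ) : ℕ := c + ((Nat.digits b a).map (· ^ 2)).sum

def digitSqSum (b a : ℕ) : ℕ := ((Nat.digits b a).map (· ^ 2)).sum

section

variable {b : ℕ}

@[simp]
lemma digitSqSum_zero : digitSqSum b 0 = 0 := by simp [digitSqSum]

lemma digitSqSum_add_mul (hb : 1 < b) {d : ℕ} (hd : d < b) (q : ℕ) :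
    digitSqSum b (d + b * q) = d ^ 2 + digitSqSum b q := by
  by_cases h : d = 0 ∧ q = 0
  · simp [h.1, h.2]
  · rw [digitSqSum, digitSqSum, Nat.digits_add b hb d q hd (by tauto)]
    simp

lemma digitSqSum_add_pow_mul (hb : 1 < b) {n r : ℕ} (hr : r < b ^ n) (q : ℕ) :
    digitSqSum b (r + b ^ n * q) = digitSqSum b r + digitSqSum b q := by
  rcases Nat.eq_zero_or_pos q with rfl | hq
  · simp
  have hlen : (Nat.digits b r).length ≤ n := (Nat.digits_length_le_iff hb r).mpr hr
  rw [← Nat.add_sub_cancel' hlen, digitSqSum, ← Nat.digits_append_zeroes_append_digits hb hq]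
  simp [digitSqSum]

lemma digitSqSum_le_pred_mul (hb : 1 < b) (a : ℕ) : digitSqSum b a ≤ (b - 1) * a :=
  calc digitSqSum b a ≤ ((Nat.digits b a).map ((b - 1) * ·)).sum := by
        refine List.sum_le_sum fun d hd => ?_
        have := Nat.digits_lt_base hb hd
        rw [sq]
        exact Nat.mul_le_mul_right d (by omega)
    _ = (b - 1) * (Nat.digits b a).sum := by rw [List.sum_map_mul_left, List.map_id']
    _ ≤ (b - 1) * a := Nat.mul_le_mul_left _ (Nat.digit_sum_le b a)

lemma digitSqSum_le_add_sq (hb : 1 < b) (a : ℕ) : digitSqSum b a ≤ a + (b - 1) ^ 2 := by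
  have hd : a % b < b := Nat.mod_lt a (by omega)
  rw [← Nat.mod_add_div a b, digitSqSum_add_mul hb hd]
  have h1 := digitSqSum_le_pred_mul hb (a / b)
  have h2 : (a % b) ^ 2 ≤ (b - 1) ^ 2 := Nat.pow_le_pow_left (by omega) 2
  have h3 : (b - 1) * (a / b) ≤ b * (a / b) := Nat.mul_le_mul_right _ (by omega)
  omega

lemma add_mul_pred_lt_digitSqSum_add_pow (hb : 1 < b) {n a : ℕ} (ha : a < b ^ n) :
    a + n * (b - 1) < digitSqSum b a + b ^ n := by
  induction n generalizing a with
  | zero => simp_all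
  | succ n ih =>
    have hq : a / b < b ^ n := by
      rw [Nat.div_lt_iff_lt_mul (by omega), ← pow_succ]; exact ha
    have ih' := ih hq
    have hdd : a % b ≤ (a % b) ^ 2 := Nat.le_self_pow two_ne_zero _
    rw [← Nat.mod_add_div a b, digitSqSum_add_mul hb (Nat.mod_lt a (by omega)), pow_succ b n]
    obtain ⟨c, rfl⟩ : ∃ c, b = c + 1 := ⟨b - 1, by omega⟩
    have hmul : c * (a / (c + 1) + 1) ≤ c * (c + 1) ^ n := Nat.mul_le_mul_left c hq
    simp only [Nat.add_sub_cancel] at ih' ⊢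
    nlinarith

lemma digitSqSum_add_pow_le_add (hb : 1 < b) {n a : ℕ} (hn : n ≠ 0) (ha : b ^ n ≤ a) :
    digitSqSum b a + b ^ n ≤ a + b * (b - 1) := by
  have hpow : 0 < b ^ n := by positivity
  obtain ⟨p, hp⟩ : ∃ p, a / b ^ n = p + 1 :=
    Nat.exists_eq_add_one.mpr ((Nat.one_le_div_iff hpow).mpr ha)
  have hr := digitSqSum_le_add_sq hb (a % b ^ n)
  have hq := digitSqSum_le_pred_mul hb (a / b ^ n)
  have hbn : b - 1 ≤ b ^ n := le_trans (Nat.sub_le b 1) (Nat.le_self_pow hn b)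
  rw [← Nat.mod_add_div a (b ^ n), digitSqSum_add_pow_mul hb (Nat.mod_lt a hpow)]
  rw [hp] at hq ⊢
  obtain ⟨c, rfl⟩ : ∃ c, b = c + 1 := ⟨b - 1, by omega⟩
  simp only [Nat.add_sub_cancel] at hr hq hbn ⊢
  nlinarith

end

theorem stmt_19_general (b : ℕ) (hb : 2 ≤ b) (k : ℕ) :
    ∃ c₀ : ℕ, ∀ c : ℕ, c₀ ≤ c → c < c₀ + k → ¬ ∃ a : ℕ, 0 < a ∧ S c b a = a := by
  obtain ⟨n, hn⟩ : ∃ n, n = b + k := ⟨_, rfl⟩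
  have hpow : 0 < b ^ n := by positivity
  have hbernoulli : n * (b - 1) < b ^ n := by
    simpa using add_mul_pred_lt_digitSqSum_add_pow hb hpow
  have hgap : n * (b - 1) = b * (b - 1) + k * (b - 1) := hn ▸ Nat.add_mul b k (b - 1)
  have hk : k ≤ k * (b - 1) := Nat.le_mul_of_pos_right k (by omega)
  refine ⟨b ^ n - n * (b - 1), fun c hc₀ hc ⟨a, _, hfix⟩ => ?_⟩
  change c + digitSqSum b a = a at hfix
  rcases lt_or_ge a (b ^ n) with ha | ha
  · have := add_mul_pred_lt_digitSqSum_add_pow hb ha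
    omega
  · have := digitSqSum_add_pow_le_add hb (by omega) ha
    omega

theorem stmt_19 (b : ℕ) (hb : 2 ≤ b) (k : ℕ) (hk : 0 < k) :
    ∃ c₀ : ℕ, ∀ c : ℕ, c₀ ≤ c → c < c₀ + k → ¬ ∃ a : ℕ, 0 < a ∧ S c b a = a :=
  stmt_19_general b hb k
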